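/- (Type S'₁) For α, β ∈ k with αβ² ≠ 0 and αβ² ≠ 1, the potential w = β·xyz + β·yzx + α·zxy − αβ·xzy − αβ·zyx − β²·yxz + β·xxx ∈ V⊗V⊗V is a twisted superpotential; that is, there exists a linear automorphism θ of V such that (θ⊗id⊗id)(φ(w)) = w. -/

import Mathlib

/-! The twisting automorphism is `θ = diag(1, u, u⁻¹)` with `u = β / α`: applying `θ ⊗ id ⊗ id`
after the cyclic shift sends each monomial `abc` of `w` to `θ(c) a b`, and these weights turn
the coefficient of each monomial into that of its rotation. -/

open TensorProduct

namespace Module.Basis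

variable {ι R M : Type*} [Semiring R] [AddCommGroup M] [Module R M]

noncomputable def diagonalEquiv (b : Basis ι R M) (d : ι → Rˣ) : M ≃ₗ[R] M :=
  b.equiv (b.unitsSMul d) (Equiv.refl ι)

@[simp]
theorem diagonalEquiv_apply_self (b : Basis ι R M) (d : ι → Rˣ) (i : ι) :
    b.diagonalEquiv d (b i) = d i • b i := by
  rw [diagonalEquiv, equiv_apply, Equiv.refl_apply, unitsSMul_apply]

end Module.Basis

theorem stmt_9_general (k : Type*) [Field k]
    (V : Type*) [AddCommGroup V] [Module k V] (B : Module.Basis (Fin 3) k V)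
    (φ : (V ⊗[k] (V ⊗[k] V)) →ₗ[k] (V ⊗[k] (V ⊗[k] V)))
    (hφ : ∀ a b c : V, φ (a ⊗ₜ[k] (b ⊗ₜ[k] c)) = c ⊗ₜ[k] (a ⊗ₜ[k] b))
    (α β : k) (h0 : α * β^2 ≠ 0) :
    let x := B 0; let y := B 1; let z := B 2
    let t : V → V → V → V ⊗[k] (V ⊗[k] V) := fun u v w => u ⊗ₜ[k] (v ⊗ₜ[k] w)
    let w := β • t x y z + β • t y z x + α • t z x y - (α*β) • t x z y
      - (α*β) • t z y x - β^2 • t y x z + β • t x x x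
    ∃ θ : V ≃ₗ[k] V,
      TensorProduct.map θ.toLinearMap
        (TensorProduct.map (LinearMap.id : V →ₗ[k] V) (LinearMap.id : V →ₗ[k] V))
        (φ w) = w := by
  intro x y z t w
  have hα : α ≠ 0 := left_ne_zero_of_mul h0
  have hβ : β ≠ 0 := pow_ne_zero_iff two_ne_zero |>.mp (right_ne_zero_of_mul h0)
  let u : kˣ := Units.mk0 (β / α) (div_ne_zero hβ hα)
  let θ := B.diagonalEquiv ![1, u, u⁻¹]
  have hθx : θ x = x := by simp [θ, x]
  have hθy : θ y = (β / α) • y := by simp [θ, y, u]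
  have hθz : θ z = (α / β) • z := by simp [θ, z, u, Units.smul_def]
  refine ⟨θ, ?_⟩
  simp only [w, t, map_add, map_sub, map_smul, hφ, map_tmul, LinearMap.id_coe, id_eq,
    LinearEquiv.coe_coe, hθx, hθy, hθz, ← smul_tmul', smul_smul]
  match_scalars <;> field_simp

theorem stmt_9 (k : Type*) [Field k] [IsAlgClosed k] [CharZero k]
    (V : Type*) [AddCommGroup V] [Module k V] (B : Module.Basis (Fin 3) k V)
    (φ : (V ⊗[k] (V ⊗[k] V)) →ₗ[k] (V ⊗[k] (V ⊗[k] V)))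
    (hφ : ∀ a b c : V, φ (a ⊗ₜ[k] (b ⊗ₜ[k] c)) = c ⊗ₜ[k] (a ⊗ₜ[k] b))
    (α β : k) (h0 : α * β^2 ≠ 0) (h1 : α * β^2 ≠ 1) :
    let x := B 0; let y := B 1; let z := B 2
    let t : V → V → V → V ⊗[k] (V ⊗[k] V) := fun u v w => u ⊗ₜ[k] (v ⊗ₜ[k] w)
    let w := β • t x y z + β • t y z x + α • t z x y - (α*β) • t x z y
      - (α*β) • t z y x - β^2 • t y x z + β • t x x x
    ∃ θ : V ≃ₗ[k] V,
      TensorProduct.map θ.toLinearMap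
        (TensorProduct.map (LinearMap.id : V →ₗ[k] V) (LinearMap.id : V →ₗ[k] V))
        (φ w) = w :=
  stmt_9_general k V B φ hφ α β h0
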